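/- Let q ≥ 2 be an integer, let s ∈ {1,…,q−1}, and let ρ ∈ [2/(s+2), 2/(s+1)]. Then the supremum over all feasible vectors α of ρ·Σ_{i=1}^q α_i·log₂ i is attained and equals (ρ(s+2)−2)·log₂ s + (2−ρ(s+1))·log₂(s+1). -/

import Mathlib

/-- A vector `α = (α 1, …, α q)` (indexed `1,…,q`) is feasible for `q` and `ρ` if all
entries are nonnegative, they sum to `1`, and `Σ_{i=1}^q i·α_i = 2/ρ − 1`. -/
def Feasible (q : ℕ) (ρ : ℝ) (α : ℕ → ℝ) : Prop :=
  (∀ i ∈ Finset.Icc 1 q, 0 ≤ α i) ∧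
  (∑ i ∈ Finset.Icc 1 q, α i = 1) ∧
  (∑ i ∈ Finset.Icc 1 q, (i : ℝ) * α i = 2 / ρ - 1)

/-- The objective `Σ_{i=1}^q α_i · log₂ i`. -/
noncomputable def objective (q : ℕ) (α : ℕ → ℝ) : ℝ :=
  ∑ i ∈ Finset.Icc 1 q, α i * Real.logb 2 i

lemma log_lower (x : ℝ) (hx : 0 < x) : 1 - 1/x ≤ Real.log x := by
  have h := Real.log_le_sub_one_of_pos (show (0:ℝ) < 1/x by positivity)
  rw [one_div, Real.log_inv] at h
  have hx' : x⁻¹ = 1/x := (one_div x).symm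
  rw [hx'] at h
  linarith

lemma chord (s i : ℕ) (hs : 1 ≤ s) (hi : 1 ≤ i) :
    Real.log i ≤ Real.log s + ((i:ℝ) - s) * (Real.log ((s:ℝ)+1) - Real.log s) := by
  have hs0 : (0:ℝ) < s := by exact_mod_cast hs
  have hi0 : (0:ℝ) < i := by exact_mod_cast hi
  have hs10 : (0:ℝ) < (s:ℝ)+1 := by linarith
  rcases le_or_gt i s with h | h
  · have hcast : (i:ℝ) ≤ s := by exact_mod_cast h
    -- D ≤ 1/s
    have hD : Real.log ((s:ℝ)+1) - Real.log s ≤ 1/s := by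
      have h1 := Real.log_le_sub_one_of_pos (show (0:ℝ) < ((s:ℝ)+1)/s by positivity)
      rw [Real.log_div (by linarith) hs0.ne'] at h1
      have : ((s:ℝ)+1)/s - 1 = 1/s := by field_simp; ring
      linarith
    -- log s - log i ≥ 1 - i/s
    have h2 : 1 - (i:ℝ)/s ≤ Real.log s - Real.log i := by
      have h3 := log_lower ((s:ℝ)/i) (by positivity)
      rw [Real.log_div hs0.ne' hi0.ne'] at h3
      have : 1/((s:ℝ)/i) = (i:ℝ)/s := by field_simp
      rw [this] at h3; linarith
    have hslb : (0:ℝ) ≤ Real.log ((s:ℝ)+1) - Real.log s := by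
      have := Real.log_le_log hs0 (show (s:ℝ) ≤ (s:ℝ)+1 by linarith)
      linarith
    -- (i-s)*D ≥ (i-s)/s since i-s ≤ 0 and D ≤ 1/s
    have key : ((i:ℝ) - s) * (1/s) ≤ ((i:ℝ) - s) * (Real.log ((s:ℝ)+1) - Real.log s) :=
      mul_le_mul_of_nonpos_left hD (show (i:ℝ) - s ≤ 0 by linarith)
    have : ((i:ℝ) - s) * (1/s) = (i:ℝ)/s - 1 := by field_simp
    linarith
  · have hcast : (s:ℝ) + 1 ≤ (i:ℝ) := by exact_mod_cast h
    have hD : 1/((s:ℝ)+1) ≤ Real.log ((s:ℝ)+1) - Real.log s := by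
      have h3 := log_lower (((s:ℝ)+1)/s) (by positivity)
      rw [Real.log_div (by linarith) hs0.ne'] at h3
      have : 1/(((s:ℝ)+1)/s) = (s:ℝ)/((s:ℝ)+1) := by field_simp
      rw [this] at h3
      have : 1 - (s:ℝ)/((s:ℝ)+1) = 1/((s:ℝ)+1) := by field_simp; ring
      linarith
    have h2 : Real.log i - Real.log ((s:ℝ)+1) ≤ (i:ℝ)/((s:ℝ)+1) - 1 := by
      have h1 := Real.log_le_sub_one_of_pos (show (0:ℝ) < (i:ℝ)/((s:ℝ)+1) by positivity)
      rw [Real.log_div hi0.ne' (by linarith)] at h1; linarith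
    have key : ((i:ℝ) - s - 1) * (1/((s:ℝ)+1)) ≤
        ((i:ℝ) - s - 1) * (Real.log ((s:ℝ)+1) - Real.log s) :=
      mul_le_mul_of_nonneg_left hD (show (0:ℝ) ≤ (i:ℝ) - s - 1 by linarith)
    have heq : ((i:ℝ) - s - 1) * (1/((s:ℝ)+1)) = (i:ℝ)/((s:ℝ)+1) - 1 := by
      field_simp; ring
    nlinarith
lemma chord_logb (s i : ℕ) (hs : 1 ≤ s) (hi : 1 ≤ i) :
    Real.logb 2 i ≤ Real.logb 2 s + ((i:ℝ) - s) * (Real.logb 2 ((s:ℝ)+1) - Real.logb 2 s) := by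
  have h2 : (0:ℝ) < Real.log 2 := Real.log_pos one_lt_two
  have h := chord s i hs hi
  simp only [Real.logb]
  rw [show Real.log s / Real.log 2 + ((i:ℝ) - s) * (Real.log ((s:ℝ)+1) / Real.log 2 -
      Real.log s / Real.log 2) = (Real.log s + ((i:ℝ) - s) * (Real.log ((s:ℝ)+1) -
      Real.log s)) / Real.log 2 by ring]
  exact div_le_div_of_nonneg_right h h2.le

theorem stmt12 (q s : ℕ) (hq : 2 ≤ q) (hs1 : 1 ≤ s) (hsq : s ≤ q - 1)
    (ρ : ℝ) (hρ : ρ ∈ Set.Icc (2 / ((s : ℝ) + 2)) (2 / ((s : ℝ) + 1))) :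
    IsGreatest {r : ℝ | ∃ α : ℕ → ℝ, Feasible q ρ α ∧ r = ρ * objective q α}
      ((ρ * ((s : ℝ) + 2) - 2) * Real.logb 2 s +
        (2 - ρ * ((s : ℝ) + 1)) * Real.logb 2 ((s : ℝ) + 1)) := by
  obtain ⟨hρ1, hρ2⟩ := hρ
  have hs0 : (0:ℝ) < s := by exact_mod_cast hs1
  have hρpos : 0 < ρ := lt_of_lt_of_le (by positivity) hρ1
  have hsq' : s + 1 ≤ q := by omega
  have h2ρa : 2 / ρ ≤ (s:ℝ) + 2 := by
    rw [div_le_iff₀ hρpos]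
    have := (div_le_iff₀ (show (0:ℝ) < (s:ℝ)+2 by linarith)).mp hρ1
    nlinarith
  have h2ρb : (s:ℝ) + 1 ≤ 2 / ρ := by
    rw [le_div_iff₀ hρpos]
    have := (le_div_iff₀ (show (0:ℝ) < (s:ℝ)+1 by linarith)).mp hρ2
    nlinarith
  set a : ℝ := (s:ℝ) + 2 - 2/ρ with ha_def
  set b : ℝ := 2/ρ - ((s:ℝ) + 1) with hb_def
  have hann : 0 ≤ a := by rw [ha_def]; linarith
  have hbnn : 0 ≤ b := by rw [hb_def]; linarith
  set C : ℝ := Real.logb 2 s with hC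
  set D : ℝ := Real.logb 2 ((s:ℝ)+1) - Real.logb 2 s with hD
  have hρ2eq : ρ * (2/ρ) = 2 := mul_div_cancel₀ 2 hρpos.ne'
  constructor
  · -- membership
    refine ⟨fun i => if i = s then a else if i = s+1 then b else 0, ⟨?_, ?_, ?_⟩, ?_⟩
    · intro i _
      by_cases h1 : i = s
      · simp only [h1, if_pos rfl]; exact hann
      · by_cases h2 : i = s+1
        · subst h2; simp only [if_neg h1, if_pos rfl]; exact hbnn
        · simp [h1, h2]
    · rw [← Finset.sum_subset (show ({s, s+1} : Finset ℕ) ⊆ Finset.Icc 1 q by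
        intro x hx; simp at hx; rcases hx with rfl | rfl <;> simp [Finset.mem_Icc] <;> omega)
        (by intro x hx hx'; simp at hx'; simp [hx'.1, hx'.2])]
      rw [Finset.sum_pair (by omega : s ≠ s+1)]
      simp; ring
    · rw [← Finset.sum_subset (show ({s, s+1} : Finset ℕ) ⊆ Finset.Icc 1 q by
        intro x hx; simp at hx; rcases hx with rfl | rfl <;> simp [Finset.mem_Icc] <;> omega)
        (by intro x hx hx'; simp at hx'; simp [hx'.1, hx'.2])]
      rw [Finset.sum_pair (by omega : s ≠ s+1)]
      simp; push_cast; ring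
    · rw [objective, ← Finset.sum_subset (show ({s, s+1} : Finset ℕ) ⊆ Finset.Icc 1 q by
        intro x hx; simp at hx; rcases hx with rfl | rfl <;> simp [Finset.mem_Icc] <;> omega)
        (by intro x hx hx'; simp at hx'; simp [hx'.1, hx'.2])]
      rw [Finset.sum_pair (by omega : s ≠ s+1)]
      simp only [if_pos rfl, if_neg (by omega : s+1 ≠ s), if_pos rfl]
      push_cast
      rw [ha_def, hb_def]
      have : ρ * (((s:ℝ) + 2 - 2/ρ) * Real.logb 2 s + (2/ρ - ((s:ℝ)+1)) * Real.logb 2 ((s:ℝ)+1))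
          = (ρ * ((s:ℝ)+2) - ρ*(2/ρ)) * Real.logb 2 s
            + (ρ*(2/ρ) - ρ*((s:ℝ)+1)) * Real.logb 2 ((s:ℝ)+1) := by ring
      rw [this, hρ2eq]
  · -- upper bound
    rintro r ⟨α, ⟨hpos, hsum, hmom⟩, rfl⟩
    have hob : objective q α ≤ C + (2/ρ - 1 - (s:ℝ)) * D := by
      have step1 : objective q α ≤ ∑ i ∈ Finset.Icc 1 q, α i * (C + ((i:ℝ) - s) * D) := by
        apply Finset.sum_le_sum
        intro i hi
        have hi1 : 1 ≤ i := (Finset.mem_Icc.mp hi).1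
        exact mul_le_mul_of_nonneg_left (chord_logb s i hs1 hi1) (hpos i hi)
      have step2 : ∑ i ∈ Finset.Icc 1 q, α i * (C + ((i:ℝ) - s) * D)
          = C * (∑ i ∈ Finset.Icc 1 q, α i)
            + D * (∑ i ∈ Finset.Icc 1 q, (i:ℝ) * α i)
            - D * (s:ℝ) * (∑ i ∈ Finset.Icc 1 q, α i) := by
        rw [Finset.sum_congr rfl (g := fun i => C * α i + D * ((i:ℝ) * α i) - D * (s:ℝ) * α i)
          (fun i _ => by ring), Finset.sum_sub_distrib, Finset.sum_add_distrib,
          ← Finset.mul_sum, ← Finset.mul_sum, ← Finset.mul_sum, mul_assoc]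
      rw [step2, hsum, hmom] at step1
      calc objective q α ≤ C * 1 + D * (2/ρ - 1) - D * s * 1 := step1
        _ = C + (2/ρ - 1 - (s:ℝ)) * D := by ring
    have := mul_le_mul_of_nonneg_left hob hρpos.le
    calc ρ * objective q α ≤ ρ * (C + (2/ρ - 1 - (s:ℝ)) * D) := this
      _ = ρ * C + (ρ * (2/ρ) - ρ - ρ * s) * D := by ring
      _ = ρ * C + (2 - ρ*((s:ℝ)+1)) * D := by rw [hρ2eq]; ring
      _ = (ρ * ((s:ℝ)+2) - 2) * Real.logb 2 s + (2 - ρ*((s:ℝ)+1)) * Real.logb 2 ((s:ℝ)+1) := by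
          rw [hC, hD]; ring
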